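/- The step-bounded halting predicate T, where T(n,m,k) holds if and only if program number n halts on input m within k steps, is primitive recursive. Precisely: the function ℕ × ℕ × ℕ → ℕ sending (n,m,k) to 1 if the step-bounded evaluation evaln k (Code.ofNat n) m returns a value (isSome), and to 0 otherwise, is primitive recursive. -/

import Mathlib

open Nat.Partrec (Code)

theorem Nat.Partrec.Code.primrec_evaln_ofNat :
    Primrec fun p : ℕ × ℕ × ℕ => evaln p.2.2 (Denumerable.ofNat Code p.1) p.2.1 :=
  primrec_evaln.comp <|
    ((Primrec.snd.comp Primrec.snd).pair ((Primrec.ofNat Code).comp Primrec.fst)).pair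
      (Primrec.fst.comp Primrec.snd)

/-- The step-bounded halting predicate `T(n,m,k)` (program number `n` halts on input `m`
within `k` steps), viewed as a `{0,1}`-valued function, is primitive recursive. -/
theorem stepBounded_halting_primrec :
    Primrec (fun p : ℕ × ℕ × ℕ =>
      if (Nat.Partrec.Code.evaln p.2.2 (Denumerable.ofNat Code p.1) p.2.1).isSome
      then (1 : ℕ) else 0) :=
  Primrec.ite
    (Primrec.primrecPred <| by simpa using Primrec.option_isSome.comp Code.primrec_evaln_ofNat)
    (Primrec.const 1) (Primrec.const 0)
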